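/- arXiv:2307.02619 — 2 statements merged into one kernel-verified Lean document; each statement's English description precedes it below -/
import Mathlib

section
/- For all integers i, j ≥ 0, the series A_{i,j}(z) satisfy the two linear relations in ℂ((z^{−1})): z·A_{i,j}(z) − δ_{i,j} = Σ_{r=1}^{p} a_j^{(−r)} A_{i,j+r}(z) + Σ_{r=0}^{min(j,q)} a_{j−r}^{(r)} A_{i,j−r}(z), and z·A_{i,j}(z) − δ_{i,j} = Σ_{r=1}^{q} a_i^{(r)} A_{i+r,j}(z) + Σ_{r=0}^{min(i,p)} a_{i−r}^{(−r)} A_{i−r,j}(z), where δ_{i,j} is the Kronecker delta. -/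
open scoped BigOperators
open Finset

noncomputable section

/-- The field `ℂ((z⁻¹))`, realized as Laurent series in the variable `t = z⁻¹`. -/
abbrev LS : Type := LaurentSeries ℂ

/-- The element `z` of `ℂ((z⁻¹))` (i.e. `t⁻¹`). -/
def zLS : LS := HahnSeries.single (-1 : ℤ) (1 : ℂ)

/-- Constant (scalar) Laurent series. -/
def CLS (c : ℂ) : LS := HahnSeries.C c

/-- The generating series `Σ_{n ≥ 0} c n · z^{-n-1}` in `ℂ((z⁻¹))`. -/
def gen (c : ℕ → ℂ) : LS :=
  HahnSeries.single (1 : ℤ) (1 : ℂ) * (HahnSeries.ofPowerSeries ℤ ℂ) (PowerSeries.mk c)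

/-- Weight of a step of displacement `s` starting at height `h`:
`a_h^{(s)}` if `s ≥ 0`, and `a_{h+s}^{(s)}` if `s < 0`.  (Here `a k n = aₙ⁽ᵏ⁾`.) -/
def stepW (a : ℤ → ℤ → ℂ) (h s : ℤ) : ℂ := if 0 ≤ s then a s h else a s (h + s)

/-- Extend a finite step sequence by zero. -/
def ext {n : ℕ} (s : Fin n → ℤ) : ℕ → ℤ := fun t => if h : t < n then s ⟨t, h⟩ else 0

/-- Height after `k` steps, starting at height `i`. -/
def hgt (i : ℤ) (σ : ℕ → ℤ) (k : ℕ) : ℤ := i + ∑ t ∈ Finset.range k, σ t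

/-- Weight of the lattice path of length `n` starting at height `i` with steps `σ`. -/
def wgt (a : ℤ → ℤ → ℂ) (n : ℕ) (i : ℤ) (σ : ℕ → ℤ) : ℂ :=
  ∏ k ∈ Finset.range n, stepW a (hgt i σ k) (σ k)

/-- All admissible step sequences of length `n` (each step in `[-p, q]`). -/
def steps (p q n : ℕ) : Finset (Fin n → ℤ) :=
  Fintype.piFinset fun _ => Finset.Icc (-(p : ℤ)) (q : ℤ)

/-- `A_{[n,i,j]}`: weight polynomial of paths of length `n` from `(0,i)` to `(n,j)`
staying at height `≥ 0`. -/
def Apoly (p q : ℕ) (a : ℤ → ℤ → ℂ) (n : ℕ) (i j : ℤ) : ℂ :=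
  ∑ s ∈ steps p q n,
    if hgt i (ext s) n = j ∧ ∀ k ≤ n, 0 ≤ hgt i (ext s) k then wgt a n i (ext s) else 0

/-- `W_{[n,i,j]}`: weight polynomial of unrestricted paths of length `n` from `(0,i)` to `(n,j)`. -/
def Wpoly (p q : ℕ) (a : ℤ → ℤ → ℂ) (n : ℕ) (i j : ℤ) : ℂ :=
  ∑ s ∈ steps p q n, if hgt i (ext s) n = j then wgt a n i (ext s) else 0

/-- `V_{[n,i,j]}`: weight polynomial of paths of length `n` from `(0,i)` to `(n,j)`
staying at height `≤ -1`. -/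
def Vpoly (p q : ℕ) (a : ℤ → ℤ → ℂ) (n : ℕ) (i j : ℤ) : ℂ :=
  ∑ s ∈ steps p q n,
    if hgt i (ext s) n = j ∧ ∀ k ≤ n, hgt i (ext s) k ≤ -1 then wgt a n i (ext s) else 0

/-- `A_{[ℓ,i,j,N]}`: weight polynomial of paths of length `ℓ` from `(0,i)` to `(ℓ,j)`
with all heights in `{0, …, N-1}`. -/
def Aboxpoly (p q : ℕ) (a : ℤ → ℤ → ℂ) (N ℓ : ℕ) (i j : ℤ) : ℂ :=
  ∑ s ∈ steps p q ℓ,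
    if hgt i (ext s) ℓ = j ∧ ∀ k ≤ ℓ, 0 ≤ hgt i (ext s) k ∧ hgt i (ext s) k ≤ (N : ℤ) - 1
    then wgt a ℓ i (ext s) else 0

/-- The generating series `A_{i,j}(z)`. -/
def Aser (p q : ℕ) (a : ℤ → ℤ → ℂ) (i j : ℤ) : LS := gen fun n => Apoly p q a n i j

/-- The generating series `W_{i,j}(z)`. -/
def Wser (p q : ℕ) (a : ℤ → ℤ → ℂ) (i j : ℤ) : LS := gen fun n => Wpoly p q a n i j

/-- The generating series `V_{i,j}(z)`. -/
def Vser (p q : ℕ) (a : ℤ → ℤ → ℂ) (i j : ℤ) : LS := gen fun n => Vpoly p q a n i j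

/-!
Splitting a path of length `n + 1` into its last step and a path of length `n` gives
`A_{[n+1,i,j]} = Σ_k w_k A_{[n,i,j-k]}`, where `w_k` is the weight of the step of size `k`
ending at `j`; the terms with `j - k < 0` vanish, which cuts the upward steps off at `min(j, q)`.
Splitting off the first step instead gives the second recursion. Since `A_{[0,i,j]} = δ_{i,j}`,
multiplying the generating series by `z` turns these recursions into the two relations.
-/

section Reindexing

variable {M : Type*} [AddCommMonoid M]

lemma sum_Icc_neg_natCast_natCast (p q : ℕ) (f : ℤ → M) :
    ∑ x ∈ Icc (-(p : ℤ)) q, f x = ∑ r ∈ Icc 1 p, f (-(r : ℤ)) + ∑ r ∈ Icc 0 q, f r := by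
  have hsplit : Icc (-(p : ℤ)) q = Icc (-(p : ℤ)) (-1) ∪ Icc 0 q := by
    ext x; simp only [mem_Icc, mem_union]; omega
  have hdisj : Disjoint (Icc (-(p : ℤ)) (-1)) (Icc 0 (q : ℤ)) :=
    disjoint_left.2 fun x hx hx' => by simp only [mem_Icc] at hx hx'; omega
  rw [hsplit, sum_union hdisj]
  congr 1
  · refine sum_nbij' (fun x => (-x).toNat) (fun r => -(r : ℤ)) ?_ ?_ ?_ ?_ ?_ <;>
      intro x hx <;> simp only [mem_Icc] at hx ⊢ <;>
      first | omega | exact congrArg f (by omega)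
  · refine sum_nbij' Int.toNat (fun r => (r : ℤ)) ?_ ?_ ?_ ?_ ?_ <;>
      intro x hx <;> simp only [mem_Icc] at hx ⊢ <;>
      first | omega | exact congrArg f (by omega)

lemma sum_Icc_neg_natCast_natCast' (p q : ℕ) (f : ℤ → M) :
    ∑ x ∈ Icc (-(p : ℤ)) q, f x = ∑ r ∈ Icc 1 q, f r + ∑ r ∈ Icc 0 p, f (-(r : ℤ)) := by
  have hneg : ∑ x ∈ Icc (-(p : ℤ)) q, f x = ∑ x ∈ Icc (-(q : ℤ)) p, f (-x) :=
    sum_nbij' Neg.neg Neg.neg (by simp; omega) (by simp; omega) (by simp) (by simp) (by simp)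
  rw [hneg, sum_Icc_neg_natCast_natCast]
  simp only [neg_neg]

end Reindexing

section Series

lemma gen_add (c d : ℕ → ℂ) : gen (c + d) = gen c + gen d := by
  have : PowerSeries.mk (c + d) = PowerSeries.mk c + PowerSeries.mk d := by ext; simp
  rw [gen, gen, gen, this, map_add, mul_add]

lemma CLS_mul_gen (x : ℂ) (c : ℕ → ℂ) : CLS x * gen c = gen fun n => x * c n := by
  have : PowerSeries.mk (fun n => x * c n) = PowerSeries.C x * PowerSeries.mk c := by
    ext; simp
  rw [gen, gen, this, map_mul, CLS, ← HahnSeries.ofPowerSeries_C, mul_left_comm]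

lemma sum_CLS_mul_gen {ι : Type*} (S : Finset ι) (f : ι → ℂ) (c : ι → ℕ → ℂ) :
    ∑ r ∈ S, CLS (f r) * gen (c r) = gen fun n => ∑ r ∈ S, f r * c r n := by
  simp_rw [CLS_mul_gen]
  have := map_sum (AddMonoidHom.mk' gen gen_add) (fun r n => f r * c r n) S
  simpa [Finset.sum_fn] using this.symm

lemma zLS_mul_gen_sub (c : ℕ → ℂ) : zLS * gen c - CLS (c 0) = gen fun n => c (n + 1) := by
  have hmk : PowerSeries.mk c =
      PowerSeries.C (c 0) + PowerSeries.X * PowerSeries.mk fun n => c (n + 1) := by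
    ext n; cases n <;> simp
  have hz : zLS * HahnSeries.single (1 : ℤ) (1 : ℂ) = 1 := by
    rw [zLS, HahnSeries.single_mul_single]; simp
  rw [gen, ← mul_assoc, hz, one_mul, hmk, map_add, map_mul, HahnSeries.ofPowerSeries_C,
    HahnSeries.ofPowerSeries_X, CLS, gen, add_sub_cancel_left]

end Series

def nonnegWeight (a : ℤ → ℤ → ℂ) (n : ℕ) (i j : ℤ) (σ : ℕ → ℤ) : ℂ :=
  if hgt i σ n = j ∧ ∀ k ≤ n, 0 ≤ hgt i σ k then wgt a n i σ else 0

section Paths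

variable (a : ℤ → ℤ → ℂ) {n : ℕ} (i j : ℤ) (σ τ : ℕ → ℤ)

lemma hgt_zero : hgt i σ 0 = i := by simp [hgt]

lemma hgt_succ (k : ℕ) : hgt i σ (k + 1) = hgt i σ k + σ k := by
  simp only [hgt, sum_range_succ, add_assoc]

lemma hgt_succ_eq_hgt_tail (k : ℕ) :
    hgt i σ (k + 1) = hgt (i + σ 0) (fun m => σ (m + 1)) k := by
  simp only [hgt, sum_range_succ']; ring

variable {σ τ} in
lemma hgt_congr {k : ℕ} (h : ∀ m < k, σ m = τ m) : hgt i σ k = hgt i τ k := by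
  simp only [hgt]
  exact congrArg _ (sum_congr rfl fun m hm => h m (mem_range.1 hm))

lemma wgt_succ : wgt a (n + 1) i σ = wgt a n i σ * stepW a (hgt i σ n) (σ n) :=
  prod_range_succ _ _

lemma wgt_succ_eq_wgt_tail :
    wgt a (n + 1) i σ = stepW a i (σ 0) * wgt a n (i + σ 0) (fun m => σ (m + 1)) := by
  simp only [wgt, prod_range_succ', hgt_zero, hgt_succ_eq_hgt_tail, mul_comm]

variable {σ τ} in
lemma wgt_congr (h : ∀ m < n, σ m = τ m) : wgt a n i σ = wgt a n i τ :=
  prod_congr rfl fun k hk => by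
    have hk := mem_range.1 hk
    rw [hgt_congr i fun m hm => h m (hm.trans hk), h k hk]

variable {i} in
lemma nonnegWeight_succ_eq_tail (hi : 0 ≤ i) :
    nonnegWeight a (n + 1) i j σ =
      stepW a i (σ 0) * nonnegWeight a n (i + σ 0) j (fun m => σ (m + 1)) := by
  have hcond : (hgt i σ (n + 1) = j ∧ ∀ k ≤ n + 1, 0 ≤ hgt i σ k) ↔
      (hgt (i + σ 0) (fun m => σ (m + 1)) n = j ∧
        ∀ k ≤ n, 0 ≤ hgt (i + σ 0) (fun m => σ (m + 1)) k) := by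
    simp only [← hgt_succ_eq_hgt_tail]
    refine and_congr_right fun _ => ⟨fun h k hk => h (k + 1) (by omega), fun h k hk => ?_⟩
    cases k with
    | zero => rwa [hgt_zero]
    | succ k => exact h k (by omega)
  rw [nonnegWeight, nonnegWeight, if_congr hcond (wgt_succ_eq_wgt_tail a i σ) rfl, mul_ite,
    mul_zero]

variable {j} in
lemma nonnegWeight_succ (hj : 0 ≤ j) :
    nonnegWeight a (n + 1) i j σ =
      stepW a (j - σ n) (σ n) * nonnegWeight a n i (j - σ n) σ := by
  have hcond : (hgt i σ (n + 1) = j ∧ ∀ k ≤ n + 1, 0 ≤ hgt i σ k) ↔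
      (hgt i σ n = j - σ n ∧ ∀ k ≤ n, 0 ≤ hgt i σ k) := by
    rw [hgt_succ]
    refine ⟨fun ⟨hend, h⟩ => ⟨by omega, fun k hk => h k (by omega)⟩,
      fun ⟨hend, h⟩ => ⟨by omega, fun k hk => ?_⟩⟩
    rcases Nat.lt_or_eq_of_le hk with hk | rfl
    · exact h k (by omega)
    · rw [hgt_succ]; omega
  by_cases h : hgt i σ n = j - σ n ∧ ∀ k ≤ n, 0 ≤ hgt i σ k
  · rw [nonnegWeight, nonnegWeight, if_pos (hcond.2 h), if_pos h, wgt_succ, h.1, mul_comm]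
  · rw [nonnegWeight, nonnegWeight, if_neg (mt hcond.1 h), if_neg h, mul_zero]

variable {σ τ} in
lemma nonnegWeight_congr (h : ∀ m < n, σ m = τ m) :
    nonnegWeight a n i j σ = nonnegWeight a n i j τ := by
  have hh : ∀ k ≤ n, hgt i σ k = hgt i τ k := fun k hk =>
    hgt_congr i fun m hm => h m (by omega)
  simp only [nonnegWeight, wgt_congr a i h]
  exact if_congr (and_congr (by rw [hh n le_rfl]) (forall₂_congr fun k hk => by rw [hh k hk]))
    rfl rfl

end Paths

section StepSequences

variable {n : ℕ} (x : ℤ) (t : Fin n → ℤ)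

lemma ext_cons_zero : ext (Fin.cons x t : Fin (n + 1) → ℤ) 0 = x := by
  simp [_root_.ext]

lemma ext_cons_succ : (fun m => ext (Fin.cons x t : Fin (n + 1) → ℤ) (m + 1)) = ext t := by
  funext m
  by_cases hm : m < n
  · simp only [_root_.ext, dif_pos hm, dif_pos (Nat.succ_lt_succ hm)]
    exact Fin.cons_succ (α := fun _ => ℤ) x t ⟨m, hm⟩
  · simp only [_root_.ext, dif_neg hm, dif_neg (show ¬m + 1 < n + 1 by omega)]

lemma ext_snoc_self : ext (Fin.snoc t x : Fin (n + 1) → ℤ) n = x := by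
  simp only [_root_.ext, dif_pos n.lt_succ_self]
  exact Fin.snoc_last (α := fun _ => ℤ) x t

lemma ext_snoc_of_lt {m : ℕ} (hm : m < n) :
    ext (Fin.snoc t x : Fin (n + 1) → ℤ) m = ext t m := by
  simp only [_root_.ext, dif_pos hm, dif_pos (hm.trans n.lt_succ_self)]
  exact Fin.snoc_castSucc (α := fun _ => ℤ) x t ⟨m, hm⟩

variable {M : Type*} [AddCommMonoid M] (p q : ℕ) (f : (Fin (n + 1) → ℤ) → M)

lemma sum_steps_succ_cons :
    ∑ s ∈ steps p q (n + 1), f s =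
      ∑ x ∈ Icc (-(p : ℤ)) q, ∑ t ∈ steps p q n, f (Fin.cons x t) := by
  rw [← sum_product' (f := fun x t => f (Fin.cons x t))]
  refine (sum_equiv (Fin.consEquiv fun _ => ℤ) (fun z => ?_) fun _ _ => rfl).symm
  simp [steps, Fin.consEquiv, Fin.forall_fin_succ]

lemma sum_steps_succ_snoc :
    ∑ s ∈ steps p q (n + 1), f s =
      ∑ x ∈ Icc (-(p : ℤ)) q, ∑ t ∈ steps p q n, f (Fin.snoc t x) := by
  rw [← sum_product' (f := fun x t => f (Fin.snoc t x))]
  refine (sum_equiv (Fin.snocEquiv fun _ => ℤ) (fun z => ?_) fun _ _ => rfl).symm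
  simp [steps, Fin.snocEquiv, Fin.forall_fin_succ', and_comm]

end StepSequences

section Apoly

variable (p q : ℕ) (a : ℤ → ℤ → ℂ) (n : ℕ) {i j : ℤ}

lemma stepW_natCast (h : ℤ) (r : ℕ) : stepW a h r = a r h :=
  if_pos r.cast_nonneg

lemma stepW_neg_natCast (h : ℤ) (r : ℕ) : stepW a h (-(r : ℤ)) = a (-r) (h - r) := by
  rw [stepW]
  split_ifs with hr
  · obtain rfl : r = 0 := by omega
    simp
  · rw [sub_eq_add_neg]

lemma Apoly_eq_sum_nonnegWeight (i j : ℤ) :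
    Apoly p q a n i j = ∑ s ∈ steps p q n, nonnegWeight a n i j (ext s) :=
  rfl

lemma Apoly_zero (hi : 0 ≤ i) : Apoly p q a 0 i j = if i = j then 1 else 0 := by
  have hk : ∀ k ≤ 0, 0 ≤ hgt i (ext (Fin.elim0 : Fin 0 → ℤ)) k := fun k hk => by
    rwa [Nat.le_zero.1 hk, hgt_zero]
  simp only [Apoly, steps, Fintype.piFinset_of_isEmpty, univ_unique, sum_singleton,
    hgt_zero, wgt, range_zero, prod_empty]
  exact if_congr (and_iff_left hk) rfl rfl

lemma Apoly_eq_zero_of_neg_left (hi : i < 0) : Apoly p q a n i j = 0 :=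
  sum_eq_zero fun s _ => if_neg fun ⟨_, h⟩ => by
    have := h 0 n.zero_le
    rw [hgt_zero] at this
    omega

lemma Apoly_eq_zero_of_neg_right (hj : j < 0) : Apoly p q a n i j = 0 :=
  sum_eq_zero fun s _ => if_neg fun ⟨hend, h⟩ => by have := h n le_rfl; omega

lemma Apoly_succ_eq_sum_first_step (hi : 0 ≤ i) :
    Apoly p q a (n + 1) i j =
      ∑ x ∈ Icc (-(p : ℤ)) q, stepW a i x * Apoly p q a n (i + x) j := by
  simp only [Apoly_eq_sum_nonnegWeight, mul_sum]
  rw [sum_steps_succ_cons]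
  refine sum_congr rfl fun x _ => sum_congr rfl fun t _ => ?_
  rw [nonnegWeight_succ_eq_tail a j _ hi, ext_cons_zero, ext_cons_succ]

lemma Apoly_succ_eq_sum_last_step (hj : 0 ≤ j) :
    Apoly p q a (n + 1) i j =
      ∑ x ∈ Icc (-(p : ℤ)) q, stepW a (j - x) x * Apoly p q a n i (j - x) := by
  simp only [Apoly_eq_sum_nonnegWeight, mul_sum]
  rw [sum_steps_succ_snoc]
  refine sum_congr rfl fun x _ => sum_congr rfl fun t _ => ?_
  rw [nonnegWeight_succ a i _ hj, ext_snoc_self,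
    nonnegWeight_congr a i (j - x) fun m hm => ext_snoc_of_lt x t hm]

lemma Apoly_succ_first_step (hi : 0 ≤ i) :
    Apoly p q a (n + 1) i j =
      ∑ r ∈ Icc 1 q, a r i * Apoly p q a n (i + r) j +
        ∑ r ∈ Icc 0 (min i.toNat p), a (-(r : ℤ)) (i - r) * Apoly p q a n (i - r) j := by
  rw [Apoly_succ_eq_sum_first_step p q a n hi, sum_Icc_neg_natCast_natCast']
  refine congrArg₂ (· + ·) ?_ ?_
  · simp only [stepW_natCast]
  · rw [← sum_subset (Icc_subset_Icc_right (min_le_right i.toNat p)) fun r hr hr' => ?_]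
    · simp only [stepW_neg_natCast, ← sub_eq_add_neg]
    · simp only [mem_Icc] at hr hr'
      rw [Apoly_eq_zero_of_neg_left p q a n (by omega), mul_zero]

lemma Apoly_succ_last_step (hj : 0 ≤ j) :
    Apoly p q a (n + 1) i j =
      ∑ r ∈ Icc 1 p, a (-(r : ℤ)) j * Apoly p q a n i (j + r) +
        ∑ r ∈ Icc 0 (min j.toNat q), a r (j - r) * Apoly p q a n i (j - r) := by
  rw [Apoly_succ_eq_sum_last_step p q a n hj, sum_Icc_neg_natCast_natCast]
  refine congrArg₂ (· + ·) ?_ ?_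
  · simp only [stepW_neg_natCast, sub_neg_eq_add, add_sub_cancel_right]
  · rw [← sum_subset (Icc_subset_Icc_right (min_le_right j.toNat q)) fun r hr hr' => ?_]
    · simp only [stepW_natCast]
    · simp only [mem_Icc] at hr hr'
      rw [Apoly_eq_zero_of_neg_right p q a n (by omega), mul_zero]

end Apoly

theorem proposition_linear_relations_general
    (p q : ℕ) (a : ℤ → ℤ → ℂ) (i j : ℤ)
    (hi : 0 ≤ i) (hj : 0 ≤ j) :
    (zLS * Aser p q a i j - CLS (if i = j then 1 else 0) =
        ∑ r ∈ Finset.Icc 1 p, CLS (a (-(r : ℤ)) j) * Aser p q a i (j + r) +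
          ∑ r ∈ Finset.Icc 0 (min j.toNat q),
            CLS (a (r : ℤ) (j - r)) * Aser p q a i (j - r)) ∧
    (zLS * Aser p q a i j - CLS (if i = j then 1 else 0) =
        ∑ r ∈ Finset.Icc 1 q, CLS (a (r : ℤ) i) * Aser p q a (i + r) j +
          ∑ r ∈ Finset.Icc 0 (min i.toNat p),
            CLS (a (-(r : ℤ)) (i - r)) * Aser p q a (i - r) j) := by
  have hshift : zLS * Aser p q a i j - CLS (if i = j then 1 else 0) =
      gen fun n => Apoly p q a (n + 1) i j := by
    rw [← Apoly_zero p q a hi, Aser, zLS_mul_gen_sub]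
  rw [hshift]
  simp only [Aser, sum_CLS_mul_gen, ← gen_add]
  exact ⟨congrArg gen (funext fun n => Apoly_succ_last_step p q a n hj),
    congrArg gen (funext fun n => Apoly_succ_first_step p q a n hi)⟩

/-- **Proposition 2.2** (linear relations for the series `A_{i,j}(z)`). -/
theorem proposition_linear_relations
    (p q : ℕ) (hp : 1 ≤ p) (hq : 1 ≤ q) (a : ℤ → ℤ → ℂ) (i j : ℤ)
    (hi : 0 ≤ i) (hj : 0 ≤ j) :
    (zLS * Aser p q a i j - CLS (if i = j then 1 else 0) =
        ∑ r ∈ Finset.Icc 1 p, CLS (a (-(r : ℤ)) j) * Aser p q a i (j + r) +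
          ∑ r ∈ Finset.Icc 0 (min j.toNat q),
            CLS (a (r : ℤ) (j - r)) * Aser p q a i (j - r)) ∧
    (zLS * Aser p q a i j - CLS (if i = j then 1 else 0) =
        ∑ r ∈ Finset.Icc 1 q, CLS (a (r : ℤ) i) * Aser p q a (i + r) j +
          ∑ r ∈ Finset.Icc 0 (min i.toNat p),
            CLS (a (-(r : ℤ)) (i - r)) * Aser p q a (i - r) j) :=
  proposition_linear_relations_general p q a i j hi hj
end
end

section
/- The entry φ_{0,0}(z) is nonzero, and T(F(z)) = α_0(z) + α_0^+ · F_1(z) · α_0^−, where F(z) is the q×p matrix with entries φ_{i,j}(z) (0 ≤ i ≤ q−1, 0 ≤ j ≤ p−1) and F_1(z) is the q×p matrix with entries φ^{(1)}_{i,j}(z) (0 ≤ i ≤ q−1, 0 ≤ j ≤ p−1). Equivalently, F(z) = 𝟏/(α_0(z) + α_0^+ F_1(z) α_0^−). -/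
open scoped BigOperators
open Finset

noncomputable section

/-- The one-sided banded matrix `H`: `h_{i,j} = a_{min(i,j)}^{(j-i)}` when `-p ≤ j-i ≤ q`. -/
def Hmat (p q : ℕ) (a : ℤ → ℤ → ℂ) (i j : ℕ) : ℂ :=
  if -(p : ℤ) ≤ (j : ℤ) - (i : ℤ) ∧ (j : ℤ) - (i : ℤ) ≤ (q : ℤ) then
    a ((j : ℤ) - (i : ℤ)) (min (i : ℤ) (j : ℤ)) else 0

/-- Entrywise power of a one-sided matrix whose rows are supported on `[0, i + B]`:
`(M^n)_{i,j}`. -/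
def onePow (M : ℕ → ℕ → ℂ) (B : ℕ) : ℕ → ℕ → ℕ → ℂ
  | 0, i, j => if i = j then 1 else 0
  | n + 1, i, j => ∑ r ∈ Finset.range (i + B + 1), M i r * onePow M B n r j

/-- The transformation `T` on `q × p` matrices (over a field) with nonzero `(0,0)` entry. -/
def Tmat {F : Type*} [Field F] {q p : ℕ} (hq : 0 < q) (hp : 0 < p)
    (A : Matrix (Fin q) (Fin p) F) : Matrix (Fin q) (Fin p) F := fun i j =>
  if hi : (i : ℕ) + 1 < q then
    if hj : (j : ℕ) + 1 < p then
      (A ⟨(i : ℕ) + 1, hi⟩ ⟨(j : ℕ) + 1, hj⟩ * A ⟨0, hq⟩ ⟨0, hp⟩ -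
          A ⟨0, hq⟩ ⟨(j : ℕ) + 1, hj⟩ * A ⟨(i : ℕ) + 1, hi⟩ ⟨0, hp⟩) / A ⟨0, hq⟩ ⟨0, hp⟩
    else A ⟨(i : ℕ) + 1, hi⟩ ⟨0, hp⟩ / A ⟨0, hq⟩ ⟨0, hp⟩
  else
    if hj : (j : ℕ) + 1 < p then -A ⟨0, hq⟩ ⟨(j : ℕ) + 1, hj⟩ / A ⟨0, hq⟩ ⟨0, hp⟩
    else 1 / A ⟨0, hq⟩ ⟨0, hp⟩

/-- The inverse transformation `T⁻¹` on `q × p` matrices with nonzero `(q-1,p-1)` entry. -/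
def Tinv {F : Type*} [Field F] {q p : ℕ} (hq : 0 < q) (hp : 0 < p)
    (B : Matrix (Fin q) (Fin p) F) : Matrix (Fin q) (Fin p) F := fun i j =>
  if hi : (i : ℕ) = 0 then
    if hj : (j : ℕ) = 0 then
      1 / B ⟨q - 1, Nat.sub_lt hq one_pos⟩ ⟨p - 1, Nat.sub_lt hp one_pos⟩
    else
      -B ⟨q - 1, Nat.sub_lt hq one_pos⟩ ⟨(j : ℕ) - 1, by have := j.isLt; omega⟩ /
        B ⟨q - 1, Nat.sub_lt hq one_pos⟩ ⟨p - 1, Nat.sub_lt hp one_pos⟩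
  else
    if hj : (j : ℕ) = 0 then
      B ⟨(i : ℕ) - 1, by have := i.isLt; omega⟩ ⟨p - 1, Nat.sub_lt hp one_pos⟩ /
        B ⟨q - 1, Nat.sub_lt hq one_pos⟩ ⟨p - 1, Nat.sub_lt hp one_pos⟩
    else
      (B ⟨(i : ℕ) - 1, by have := i.isLt; omega⟩ ⟨(j : ℕ) - 1, by have := j.isLt; omega⟩ *
          B ⟨q - 1, Nat.sub_lt hq one_pos⟩ ⟨p - 1, Nat.sub_lt hp one_pos⟩ -
        B ⟨(i : ℕ) - 1, by have := i.isLt; omega⟩ ⟨p - 1, Nat.sub_lt hp one_pos⟩ *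
          B ⟨q - 1, Nat.sub_lt hq one_pos⟩ ⟨(j : ℕ) - 1, by have := j.isLt; omega⟩) /
        B ⟨q - 1, Nat.sub_lt hq one_pos⟩ ⟨p - 1, Nat.sub_lt hp one_pos⟩

/-- `chainFrom τ k X m = τ_m (τ_{m+1} ( ⋯ (τ_{k-1} X)))`; in particular
`chainFrom τ k X 0 = (τ_0 ∘ τ_1 ∘ ⋯ ∘ τ_{k-1}) X`. -/
def chainFrom {M : Type*} (τ : ℕ → M → M) (k : ℕ) (X : M) (m : ℕ) : M :=
  (List.range (k - m)).foldr (fun t Y => τ (m + t) Y) X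

/-- The `q × p` matrix `α_k(z)`, whose only nonzero entry is `z - a_k^{(0)}` at `(q-1, p-1)`. -/
def alphaZ (q p : ℕ) (a : ℤ → ℤ → ℂ) (k : ℕ) : Matrix (Fin q) (Fin p) LS := fun i j =>
  if (i : ℕ) = q - 1 ∧ (j : ℕ) = p - 1 then zLS - CLS (a 0 (k : ℤ)) else 0

/-- The `q × q` matrix `α_k⁺`: first `q-1` rows of the identity, last row
`(-a_k^{(1)}, …, -a_k^{(q)})`. -/
def alphaP (q : ℕ) (a : ℤ → ℤ → ℂ) (k : ℕ) : Matrix (Fin q) (Fin q) LS := fun i j =>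
  if (i : ℕ) = q - 1 then -CLS (a (((j : ℕ) : ℤ) + 1) (k : ℤ))
  else if i = j then 1 else 0

/-- The `p × p` matrix `α_k⁻`: first `p-1` columns of the identity, last column
`(a_k^{(-1)}, …, a_k^{(-p)})ᵀ`. -/
def alphaM (p : ℕ) (a : ℤ → ℤ → ℂ) (k : ℕ) : Matrix (Fin p) (Fin p) LS := fun i j =>
  if (j : ℕ) = p - 1 then CLS (a (-(((i : ℕ) : ℤ) + 1)) (k : ℤ))
  else if i = j then 1 else 0

/-- `F_r(z)`: the `q × p` matrix of resolvent series of `H^{[r]}` (delete the first `r` rows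
and columns of `H`); `F_0 = F`. -/
def Fmat (p q : ℕ) (a : ℤ → ℤ → ℂ) (r : ℕ) : Matrix (Fin q) (Fin p) LS := fun i j =>
  gen fun n => onePow (fun i' j' => Hmat p q a (i' + r) (j' + r)) q n (i : ℕ) (j : ℕ)

/-- The transformation `τ_{α,k}(X) = T⁻¹(α_k(z) + α_k⁺ X α_k⁻)`. -/
def tauAlpha (p q : ℕ) (hq : 0 < q) (hp : 0 < p) (a : ℤ → ℤ → ℂ) (k : ℕ)
    (X : Matrix (Fin q) (Fin p) LS) : Matrix (Fin q) (Fin p) LS :=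
  Tinv hq hp (alphaZ q p a k + alphaP q a k * X * alphaM p a k)

/-!
Put `t = z⁻¹` and let `R_{ij} = Σₙ (Hⁿ)_{ij} tⁿ⁺¹` be the resolvent series of `H`, and `R¹` that
of `H^{[1]}`. Writing `H` in block form with corner `h₀₀`, first row `(h_{0,r+1})` and first
column `(h_{s+1,0})`, the Schur-complement formulas for the resolvent read
`R_{i+1,j} = R¹_{i,j-1} + C_i R_{0j}`, `R_{0,j+1} = B_j R_{00}` and
`(1 - t h₀₀ - t Σ_r h_{0,r+1} C_r) R_{00} = t`, with `C_i = Σ_s R¹_{is} h_{s+1,0}` (paths that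
first reach height `0` at their last step) and `B_j = Σ_r h_{0,r+1} R¹_{rj}` (paths that leave `0`
for good). Each formula holds because the difference `Y` of its two sides satisfies
`Y_i = t Σ_s h^{[1]}_{is} Y_s`, which forces `Y = 0` coefficient by coefficient; the formula for
`R_{0,j+1}` is the one for `R_{j+1,0}` applied to the transpose of `H`. Read in `ℂ((z⁻¹))`, where
`t` becomes invertible, the four formulas are exactly the four kinds of entries of
`T(F) = α₀ + α₀⁺ F₁ α₀⁻`, and the last one shows `φ₀₀ ≠ 0`.
-/

open PowerSeries

def IsBanded (p q : ℕ) (M : ℕ → ℕ → ℂ) : Prop :=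
  (∀ i j, i + q < j → M i j = 0) ∧ ∀ i j, j + p < i → M i j = 0

def dropFirst (M : ℕ → ℕ → ℂ) (i j : ℕ) : ℂ := M (i + 1) (j + 1)

namespace IsBanded

variable {p q : ℕ} {M : ℕ → ℕ → ℂ}

theorem dropFirst (hM : IsBanded p q M) : IsBanded p q (_root_.dropFirst M) :=
  ⟨fun _ _ h => hM.1 _ _ (by omega), fun _ _ h => hM.2 _ _ (by omega)⟩

theorem transpose (hM : IsBanded p q M) : IsBanded q p fun i j => M j i :=
  ⟨fun i j h => hM.2 j i h, fun i j h => hM.1 j i h⟩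

end IsBanded

theorem isBanded_Hmat (p q : ℕ) (a : ℤ → ℤ → ℂ) : IsBanded p q (Hmat p q a) :=
  ⟨fun _ _ _ => if_neg (by omega), fun _ _ _ => if_neg (by omega)⟩

section ResolventSeries

variable {p q : ℕ} {M : ℕ → ℕ → ℂ}

theorem onePow_succ_eq_sum_right (hM : IsBanded p q M) (n i j : ℕ) :
    onePow M q (n + 1) i j = ∑ r ∈ range (j + p + 1), onePow M q n i r * M r j := by
  induction n generalizing i with
  | zero =>
    simp only [onePow, mul_ite, mul_one, mul_zero, ite_mul, one_mul, zero_mul,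
      Finset.sum_ite_eq, Finset.sum_ite_eq', Finset.mem_range]
    split_ifs <;> first | rfl | (symm; apply hM.1; omega) | (apply hM.2; omega)
  | succ n ih =>
    calc onePow M q (n + 2) i j
        = ∑ r ∈ range (i + q + 1), ∑ s ∈ range (j + p + 1), M i r * onePow M q n r s * M s j := by
          simp only [onePow] at ih ⊢
          simp only [ih, Finset.mul_sum, mul_assoc]
      _ = ∑ s ∈ range (j + p + 1), onePow M q (n + 1) i s * M s j := by
          rw [Finset.sum_comm]
          simp only [onePow, Finset.sum_mul]

theorem onePow_transpose (hM : IsBanded p q M) (n i j : ℕ) :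
    onePow (fun i j => M j i) p n i j = onePow M q n j i := by
  induction n generalizing i j with
  | zero => simp only [onePow, eq_comm]
  | succ n ih =>
    rw [onePow_succ_eq_sum_right hM]
    simp only [onePow, ih, mul_comm]

def resolventSeries (M : ℕ → ℕ → ℂ) (B i j : ℕ) : ℂ⟦X⟧ :=
  X * PowerSeries.mk fun n => onePow M B n i j

theorem resolventSeries_eq (M : ℕ → ℕ → ℂ) (B i j : ℕ) :
    resolventSeries M B i j = X * ((if i = j then 1 else 0) +
      ∑ r ∈ range (i + B + 1), C (M i r) * resolventSeries M B r j) := by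
  rw [resolventSeries]
  congr 1
  ext n
  rcases n with _ | n
  · simp [resolventSeries, onePow]
  · simp [resolventSeries, onePow, map_sum, coeff_C_mul, coeff_succ_X_mul, apply_ite, coeff_one]

theorem eq_zero_of_forall_eq_X_mul_sum {B : ℕ} {Y : ℕ → ℂ⟦X⟧}
    (hY : ∀ i, Y i = X * ∑ r ∈ range (i + B + 1), C (M i r) * Y r) (i : ℕ) : Y i = 0 := by
  suffices ∀ n i, coeff n (Y i) = 0 from ext fun n => this n i
  intro n
  induction n with
  | zero => intro i; rw [hY, coeff_zero_X_mul]
  | succ n ih => intro i; simp [hY i, coeff_succ_X_mul, map_sum, coeff_C_mul, ih]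

theorem resolventSeries_transpose (hM : IsBanded p q M) (i j : ℕ) :
    resolventSeries (fun i j => M j i) p i j = resolventSeries M q j i := by
  simp only [resolventSeries, onePow_transpose hM]

def firstPassage (M : ℕ → ℕ → ℂ) (p q i : ℕ) : ℂ⟦X⟧ :=
  ∑ s ∈ range p, resolventSeries (dropFirst M) q i s * C (M (s + 1) 0)

def lastExit (M : ℕ → ℕ → ℂ) (q j : ℕ) : ℂ⟦X⟧ :=
  ∑ r ∈ range q, C (M 0 (r + 1)) * resolventSeries (dropFirst M) q r j

theorem firstPassage_eq (hM : IsBanded p q M) (i : ℕ) :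
    firstPassage M p q i = X * (C (M (i + 1) 0) +
      ∑ s ∈ range (i + q + 1), C (dropFirst M i s) * firstPassage M p q s) := by
  have hstart : ∑ s ∈ range p, (if i = s then 1 else 0) * C (M (s + 1) 0) = C (M (i + 1) 0) := by
    simp only [ite_mul, one_mul, zero_mul, Finset.sum_ite_eq, Finset.mem_range, ite_eq_left_iff,
      not_lt]
    intro h
    rw [hM.2 _ _ (by omega), map_zero]
  calc firstPassage M p q i
      = ∑ s ∈ range p, X * ((if i = s then 1 else 0) + ∑ r ∈ range (i + q + 1),
          C (dropFirst M i r) * resolventSeries (dropFirst M) q r s) * C (M (s + 1) 0) :=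
        Finset.sum_congr rfl fun s _ => by rw [resolventSeries_eq]
    _ = _ := by
        simp only [firstPassage, mul_add, add_mul, Finset.sum_add_distrib, Finset.mul_sum,
          Finset.sum_mul, mul_assoc, ← hstart]
        rw [Finset.sum_comm]

theorem resolventSeries_succ_left (hM : IsBanded p q M) (i j : ℕ) :
    resolventSeries M q (i + 1) j =
      (if j = 0 then 0 else resolventSeries (dropFirst M) q i (j - 1)) +
        firstPassage M p q i * resolventSeries M q 0 j := by
  set E : ℕ → ℂ⟦X⟧ := fun i => if j = 0 then 0 else resolventSeries (dropFirst M) q i (j - 1)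
  have hE : ∀ i, E i = X * ((if i + 1 = j then 1 else 0) +
      ∑ s ∈ range (i + q + 1), C (dropFirst M i s) * E s) := by
    intro i
    rcases j with _ | j
    · simp [E]
    · simp only [E, if_neg (Nat.succ_ne_zero j), Nat.add_sub_cancel, Nat.add_right_cancel_iff]
      exact resolventSeries_eq _ _ _ _
  have hR : ∀ i, resolventSeries M q (i + 1) j = X * ((if i + 1 = j then 1 else 0) +
      C (M (i + 1) 0) * resolventSeries M q 0 j +
      ∑ s ∈ range (i + q + 1), C (dropFirst M i s) * resolventSeries M q (s + 1) j) := by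
    intro i
    rw [resolventSeries_eq, show i + 1 + q + 1 = i + q + 1 + 1 by omega, Finset.sum_range_succ']
    simp only [dropFirst]
    ring
  have hdiff := eq_zero_of_forall_eq_X_mul_sum (M := dropFirst M) (B := q)
    (Y := fun i => resolventSeries M q (i + 1) j - E i -
      firstPassage M p q i * resolventSeries M q 0 j)
    (fun i => by
      rw [hR, hE, firstPassage_eq hM]
      simp only [mul_sub, Finset.sum_sub_distrib, ← mul_assoc, ← Finset.sum_mul]
      ring) i
  linear_combination hdiff

theorem resolventSeries_zero_succ (hM : IsBanded p q M) (j : ℕ) :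
    resolventSeries M q 0 (j + 1) = lastExit M q j * resolventSeries M q 0 0 := by
  have h := resolventSeries_succ_left hM.transpose j 0
  simp only [resolventSeries_transpose hM, if_true, zero_add] at h
  rw [h, firstPassage, lastExit]
  congr 1
  refine Finset.sum_congr rfl fun r _ => ?_
  rw [mul_comm]
  congr 1
  exact resolventSeries_transpose hM.dropFirst j r

theorem resolventSeries_zero_zero (hM : IsBanded p q M) :
    (1 - X * (C (M 0 0) + ∑ r ∈ range q, C (M 0 (r + 1)) * firstPassage M p q r)) *
      resolventSeries M q 0 0 = X := by
  have h := resolventSeries_eq M q 0 0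
  rw [zero_add, Finset.sum_range_succ'] at h
  simp only [resolventSeries_succ_left hM, if_true, zero_add, ← mul_assoc, ← Finset.sum_mul] at h
  linear_combination h

end ResolventSeries

theorem Tmat_eq_of {F : Type*} [Field F] {q p : ℕ} (hq : 0 < q) (hp : 0 < p)
    {A B : Matrix (Fin q) (Fin p) F}
    (hcorner : B ⟨q - 1, by omega⟩ ⟨p - 1, by omega⟩ * A ⟨0, hq⟩ ⟨0, hp⟩ = 1)
    (hcol : ∀ i (hi : i + 1 < q),
      A ⟨i + 1, hi⟩ ⟨0, hp⟩ = B ⟨i, by omega⟩ ⟨p - 1, by omega⟩ * A ⟨0, hq⟩ ⟨0, hp⟩)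
    (hrow : ∀ j (hj : j + 1 < p),
      A ⟨0, hq⟩ ⟨j + 1, hj⟩ = -(B ⟨q - 1, by omega⟩ ⟨j, by omega⟩ * A ⟨0, hq⟩ ⟨0, hp⟩))
    (hint : ∀ i j (hi : i + 1 < q) (hj : j + 1 < p), A ⟨i + 1, hi⟩ ⟨j + 1, hj⟩ =
      B ⟨i, by omega⟩ ⟨j, by omega⟩ + B ⟨i, by omega⟩ ⟨p - 1, by omega⟩ * A ⟨0, hq⟩ ⟨j + 1, hj⟩) :
    Tmat hq hp A = B := by
  have h00 : A ⟨0, hq⟩ ⟨0, hp⟩ ≠ 0 := right_ne_zero_of_mul_eq_one hcorner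
  ext ⟨i, hi'⟩ ⟨j, hj'⟩
  simp only [Tmat]
  split_ifs with hi hj hj
  · rw [div_eq_iff h00, hint i j hi hj, hcol i hi]
    ring
  · obtain rfl : j = p - 1 := by omega
    rw [div_eq_iff h00, hcol i hi]
  · obtain rfl : i = q - 1 := by omega
    rw [div_eq_iff h00, hrow j hj]
    ring
  · obtain rfl : i = q - 1 := by omega
    obtain rfl : j = p - 1 := by omega
    rw [div_eq_iff h00, hcorner]

def alphaAffine (p q : ℕ) (a : ℤ → ℤ → ℂ) (k : ℕ) (Y : Matrix (Fin q) (Fin p) LS) :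
    Matrix (Fin q) (Fin p) LS :=
  alphaZ q p a k + alphaP q a k * Y * alphaM p a k

section Alpha

variable {p q n : ℕ} {a : ℤ → ℤ → ℂ} {k : ℕ}

theorem alphaP_mul_apply_of_ne (Y : Matrix (Fin q) (Fin n) LS) {i : Fin q} (hi : (i : ℕ) ≠ q - 1)
    (j : Fin n) : (alphaP q a k * Y) i j = Y i j := by
  simp [Matrix.mul_apply, alphaP, hi]

theorem alphaP_mul_apply_of_eq (Y : Matrix (Fin q) (Fin n) LS) {i : Fin q} (hi : (i : ℕ) = q - 1)
    (j : Fin n) : (alphaP q a k * Y) i j = -∑ m : Fin q, CLS (a ((m : ℕ) + 1) k) * Y m j := by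
  simp only [Matrix.mul_apply, alphaP, if_pos hi, ← Finset.sum_neg_distrib]
  -- `alphaP` negates with `HahnSeries.instNeg`; unifying it with the ring negation by
  -- metavariables is slow, so the arguments of `neg_mul` are given.
  exact Finset.sum_congr rfl fun m _ => neg_mul (CLS _) (Y m j)

theorem mul_alphaM_apply_of_ne (Y : Matrix (Fin n) (Fin p) LS) (i : Fin n) {j : Fin p}
    (hj : (j : ℕ) ≠ p - 1) : (Y * alphaM p a k) i j = Y i j := by
  simp [Matrix.mul_apply, alphaM, hj]

theorem mul_alphaM_apply_of_eq (Y : Matrix (Fin n) (Fin p) LS) (i : Fin n) {j : Fin p}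
    (hj : (j : ℕ) = p - 1) :
    (Y * alphaM p a k) i j = ∑ l : Fin p, Y i l * CLS (a (-((l : ℕ) + 1)) k) := by
  simp [Matrix.mul_apply, alphaM, hj]

end Alpha

local notation "ι" => HahnSeries.ofPowerSeries ℤ ℂ

theorem gen_eq_ofPowerSeries (c : ℕ → ℂ) : gen c = ι (X * PowerSeries.mk c) := by
  rw [gen, map_mul, HahnSeries.ofPowerSeries_X]

theorem zLS_mul_ofPowerSeries_X : zLS * ι X = 1 := by
  rw [zLS, HahnSeries.ofPowerSeries_X, HahnSeries.single_mul_single]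
  simp

theorem zLS_sub_ofPowerSeries_mul_eq_one {S R : ℂ⟦X⟧} (h : (1 - X * S) * R = X) :
    (zLS - ι S) * ι R = 1 :=
  calc (zLS - ι S) * ι R = zLS * ι ((1 - X * S) * R) := by
        simp only [map_mul, map_sub, map_one]
        linear_combination (ι S * ι R) * zLS_mul_ofPowerSeries_X
    _ = 1 := by rw [h, zLS_mul_ofPowerSeries_X]

section Hmat

variable (p q : ℕ) (a : ℤ → ℤ → ℂ)

theorem Hmat_zero_zero : Hmat p q a 0 0 = a 0 0 := by
  simp [Hmat]

theorem Hmat_zero_succ {r : ℕ} (hr : r < q) : Hmat p q a 0 (r + 1) = a (r + 1) 0 := by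
  rw [Hmat, if_pos (by omega)]
  congr 1

theorem Hmat_succ_zero {s : ℕ} (hs : s < p) : Hmat p q a (s + 1) 0 = a (-(s + 1)) 0 := by
  rw [Hmat, if_pos (by omega)]
  congr 1

theorem Fmat_zero_apply (i : Fin q) (j : Fin p) :
    Fmat p q a 0 i j = ι (resolventSeries (Hmat p q a) q i j) :=
  gen_eq_ofPowerSeries _

theorem Fmat_one_apply (i : Fin q) (j : Fin p) :
    Fmat p q a 1 i j = ι (resolventSeries (dropFirst (Hmat p q a)) q i j) :=
  gen_eq_ofPowerSeries _

theorem ofPowerSeries_firstPassage_Hmat (i : ℕ) :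
    ι (firstPassage (Hmat p q a) p q i) = ∑ l : Fin p,
      ι (resolventSeries (dropFirst (Hmat p q a)) q i l) * CLS (a (-((l : ℕ) + 1)) 0) := by
  rw [firstPassage, map_sum, ← Fin.sum_univ_eq_sum_range]
  refine Finset.sum_congr rfl fun l _ => ?_
  rw [map_mul, HahnSeries.ofPowerSeries_C, Hmat_succ_zero p q a l.isLt, CLS]

theorem ofPowerSeries_lastExit_Hmat (j : ℕ) :
    ι (lastExit (Hmat p q a) q j) = ∑ m : Fin q,
      CLS (a ((m : ℕ) + 1) 0) * ι (resolventSeries (dropFirst (Hmat p q a)) q m j) := by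
  rw [lastExit, map_sum, ← Fin.sum_univ_eq_sum_range]
  refine Finset.sum_congr rfl fun m _ => ?_
  rw [map_mul, HahnSeries.ofPowerSeries_C, Hmat_zero_succ p q a m.isLt, CLS]

variable {p q}

theorem Fmat_one_mul_alphaM_apply_last (hp : 0 < p) (i : Fin q) :
    (Fmat p q a 1 * alphaM p a 0) i ⟨p - 1, by omega⟩ = ι (firstPassage (Hmat p q a) p q i) := by
  rw [mul_alphaM_apply_of_eq _ _ rfl, ofPowerSeries_firstPassage_Hmat]
  simp [Fmat_one_apply]

theorem alphaAffine_Fmat_apply {i j : ℕ} (hi : i + 1 < q) (hj : j + 1 < p) :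
    alphaAffine p q a 0 (Fmat p q a 1) ⟨i, by omega⟩ ⟨j, by omega⟩ =
      ι (resolventSeries (dropFirst (Hmat p q a)) q i j) := by
  rw [alphaAffine, Matrix.add_apply, mul_alphaM_apply_of_ne _ _ (by simp only; omega),
    alphaP_mul_apply_of_ne _ (by simp only; omega), Fmat_one_apply]
  simp only [alphaZ, CharP.cast_eq_zero, add_eq_right, ite_eq_right_iff, and_imp]
  omega

theorem alphaAffine_Fmat_apply_last_col {i : ℕ} (hi : i + 1 < q) (hp : 0 < p) :
    alphaAffine p q a 0 (Fmat p q a 1) ⟨i, by omega⟩ ⟨p - 1, by omega⟩ =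
      ι (firstPassage (Hmat p q a) p q i) := by
  rw [alphaAffine, Matrix.add_apply, Matrix.mul_assoc,
    alphaP_mul_apply_of_ne _ (by simp only; omega), Fmat_one_mul_alphaM_apply_last a hp]
  simp only [alphaZ, and_true, CharP.cast_eq_zero, add_eq_right, ite_eq_right_iff]
  omega

theorem alphaAffine_Fmat_apply_last_row {j : ℕ} (hj : j + 1 < p) (hq : 0 < q) :
    alphaAffine p q a 0 (Fmat p q a 1) ⟨q - 1, by omega⟩ ⟨j, by omega⟩ =
      -ι (lastExit (Hmat p q a) q j) := by
  rw [alphaAffine, Matrix.add_apply, mul_alphaM_apply_of_ne _ _ (by simp only; omega),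
    alphaP_mul_apply_of_eq _ rfl, ofPowerSeries_lastExit_Hmat]
  simp only [alphaZ, true_and, CharP.cast_eq_zero, Fmat_one_apply, add_eq_right,
    ite_eq_right_iff]
  omega

theorem alphaAffine_Fmat_apply_last_last (hq : 0 < q) (hp : 0 < p) :
    alphaAffine p q a 0 (Fmat p q a 1) ⟨q - 1, by omega⟩ ⟨p - 1, by omega⟩ =
      zLS - ι (C (Hmat p q a 0 0) +
        ∑ r ∈ range q, C (Hmat p q a 0 (r + 1)) * firstPassage (Hmat p q a) p q r) := by
  rw [alphaAffine, Matrix.add_apply, Matrix.mul_assoc, alphaP_mul_apply_of_eq _ rfl]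
  simp only [alphaZ, Fmat_one_mul_alphaM_apply_last a hp, map_add, map_sum, map_mul,
    HahnSeries.ofPowerSeries_C, Hmat_zero_zero, ← Fin.sum_univ_eq_sum_range, and_self, if_true,
    Nat.cast_zero]
  have hrow : ∀ m : Fin q, HahnSeries.C (Hmat p q a 0 (m + 1)) = CLS (a ((m : ℕ) + 1) 0) :=
    fun m => by rw [Hmat_zero_succ p q a m.isLt, CLS]
  simp only [hrow, CLS]
  ring

end Hmat

/-- **Theorem 6.1**: `φ_{0,0}(z) ≠ 0` and `T(F(z)) = α_0(z) + α_0⁺ F_1(z) α_0⁻`,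
i.e. `F(z) = 𝟏/(α_0(z) + α_0⁺ F_1(z) α_0⁻)`. -/
theorem T_of_F_eq_alpha
    (p q : ℕ) (hp : 0 < p) (hq : 0 < q) (a : ℤ → ℤ → ℂ) :
    Fmat p q a 0 ⟨0, hq⟩ ⟨0, hp⟩ ≠ 0 ∧
    Tmat hq hp (Fmat p q a 0) =
      alphaZ q p a 0 + alphaP q a 0 * Fmat p q a 1 * alphaM p a 0 := by
  show _ ∧ Tmat hq hp (Fmat p q a 0) = alphaAffine p q a 0 (Fmat p q a 1)
  have hM := isBanded_Hmat p q a
  have hcorner : alphaAffine p q a 0 (Fmat p q a 1) ⟨q - 1, by omega⟩ ⟨p - 1, by omega⟩ *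
      Fmat p q a 0 ⟨0, hq⟩ ⟨0, hp⟩ = 1 := by
    rw [alphaAffine_Fmat_apply_last_last a hq hp, Fmat_zero_apply]
    exact zLS_sub_ofPowerSeries_mul_eq_one (resolventSeries_zero_zero hM)
  refine ⟨right_ne_zero_of_mul_eq_one hcorner,
    Tmat_eq_of hq hp hcorner (fun i hi => ?_) (fun j hj => ?_) (fun i j hi hj => ?_)⟩
  · rw [alphaAffine_Fmat_apply_last_col a hi hp, Fmat_zero_apply, Fmat_zero_apply, ← map_mul]
    simpa using congrArg ι (resolventSeries_succ_left hM i 0)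
  · have h := congrArg ι (resolventSeries_zero_succ hM j)
    rw [map_mul] at h
    rw [alphaAffine_Fmat_apply_last_row a hj hq, Fmat_zero_apply, Fmat_zero_apply]
    linear_combination h
  · rw [alphaAffine_Fmat_apply a hi hj, alphaAffine_Fmat_apply_last_col a hi hp, Fmat_zero_apply,
      Fmat_zero_apply, ← map_mul, ← map_add]
    simpa using congrArg ι (resolventSeries_succ_left hM i (j + 1))
end
end
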